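/- arXiv:1904.13055 — 6 statements merged into one kernel-verified Lean document; each statement's English description precedes it below -/
import Mathlib

section
/- Let (Y, ν) be a probability space and let F_k : Y → ℝ (k ∈ ℕ) be a sequence of square integrable functions. Suppose there exist constants C, σ > 0 such that for all nonnegative integers m < n one has ∫_Y (Σ_{m < k ≤ n} F_k(y))² dν(y) ≤ C(n^σ − m^σ). Then for every ε > 0, for ν-almost every y ∈ Y, lim_{N→∞} (Σ_{1 ≤ k ≤ N} F_k(y)) / (N^{σ/2} (log N)^{3/2+ε}) = 0. -/
/-!
Rademacher–Menshov chaining: a partial sum over `(m, n]` with `n ≤ m + 2 ^ J` is a sum of at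
most one dyadic block per level `j ≤ J`, so its square is at most `J + 1` times the dyadic square
function `T_J`, the sum of the squares of all dyadic blocks of `(m, m + 2 ^ J]`. By the hypothesis
and telescoping along each level, `∫ T_J ≤ (J + 1) C 2 ^ (J σ)`. With
`d(x) = x ^ (σ / 2) (log x) ^ (3 / 2 + ε)`, the normalized bounds `(K + 2) T_{K+1} / d(2 ^ K) ^ 2`
therefore have integrals of order `K ^ (-1 - 2 ε)`, so they are summable and tend to `0` almost
everywhere; for `2 ^ K ≤ N < 2 ^ (K + 1)` they dominate the square of the normalized partial sum
up to `N`.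
-/

open MeasureTheory Filter Finset Topology

/-- Level `j` consists of the `2 ^ (J - j)` consecutive blocks of length `2 ^ j` in
`(m, m + 2 ^ J]`. -/
def dyadicSquareSum (f : ℕ → ℝ) (m J : ℕ) : ℝ :=
  ∑ j ∈ range (J + 1), ∑ i ∈ range (2 ^ (J - j)),
    (∑ k ∈ Ioc (m + i * 2 ^ j) (m + (i + 1) * 2 ^ j), f k) ^ 2

namespace dyadicSquareSum

variable (f : ℕ → ℝ) (m J : ℕ)

theorem nonneg : 0 ≤ dyadicSquareSum f m J :=
  sum_nonneg fun _ _ ↦ sum_nonneg fun _ _ ↦ sq_nonneg _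

theorem sq_sum_le : (∑ k ∈ Ioc m (m + 2 ^ J), f k) ^ 2 ≤ dyadicSquareSum f m J := by
  refine le_trans (le_of_eq ?_) (single_le_sum (fun j _ ↦ sum_nonneg fun _ _ ↦ sq_nonneg _)
    (self_mem_range_succ J))
  simp

theorem add_le_succ : dyadicSquareSum f m J + dyadicSquareSum f (m + 2 ^ J) J ≤
    dyadicSquareSum f m (J + 1) := by
  have halves : ∀ j ∈ range (J + 1),
      ∑ i ∈ range (2 ^ (J + 1 - j)), (∑ k ∈ Ioc (m + i * 2 ^ j) (m + (i + 1) * 2 ^ j), f k) ^ 2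
      = ∑ i ∈ range (2 ^ (J - j)), (∑ k ∈ Ioc (m + i * 2 ^ j) (m + (i + 1) * 2 ^ j), f k) ^ 2
      + ∑ i ∈ range (2 ^ (J - j)),
          (∑ k ∈ Ioc (m + 2 ^ J + i * 2 ^ j) (m + 2 ^ J + (i + 1) * 2 ^ j), f k) ^ 2 := by
    intro j hj
    have hjJ : j ≤ J := Nat.lt_succ_iff.1 (mem_range.1 hj)
    have hscale : 2 ^ (J - j) * 2 ^ j = 2 ^ J := by rw [← pow_add, Nat.sub_add_cancel hjJ]
    rw [show J + 1 - j = J - j + 1 by omega, pow_succ, mul_two, sum_range_add]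
    congr 1
    refine sum_congr rfl fun i _ ↦ ?_
    simp only [add_mul, hscale, one_mul, add_assoc]
  unfold dyadicSquareSum
  rw [sum_range_succ (n := J + 1), sum_congr rfl halves, sum_add_distrib]
  exact le_add_of_nonneg_right (sum_nonneg fun _ _ ↦ sq_nonneg _)

theorem le_succ : dyadicSquareSum f m J ≤ dyadicSquareSum f m (J + 1) :=
  le_trans (le_add_of_nonneg_right (nonneg f _ J)) (add_le_succ f m J)

end dyadicSquareSum

-- Peter–Paul: `(a + b) ^ 2 ≤ (1 + t) a ^ 2 + (1 + 1 / t) b ^ 2`.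
theorem add_sq_le_of_sq_le {a b c t : ℝ} (ht : 0 < t) (hb : b ^ 2 ≤ t * c) :
    (a + b) ^ 2 ≤ (t + 1) * (a ^ 2 + c) := by
  refine le_of_mul_le_mul_left ?_ ht
  nlinarith [sq_nonneg (t * a - b)]

theorem sq_sum_Ioc_le_mul_dyadicSquareSum (f : ℕ → ℝ) {m n : ℕ} (J : ℕ) (hmn : m < n)
    (hn : n ≤ m + 2 ^ J) : (∑ k ∈ Ioc m n, f k) ^ 2 ≤ (J + 1) * dyadicSquareSum f m J := by
  induction J generalizing m with
  | zero =>
    obtain rfl : n = m + 1 := by omega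
    simp [dyadicSquareSum]
  | succ J ih =>
    push_cast
    by_cases hhalf : n ≤ m + 2 ^ J
    · calc (∑ k ∈ Ioc m n, f k) ^ 2 ≤ (J + 1) * dyadicSquareSum f m J := ih hmn hhalf
        _ ≤ (J + 1 + 1) * dyadicSquareSum f m (J + 1) :=
          mul_le_mul (by linarith) (dyadicSquareSum.le_succ f m J)
            (dyadicSquareSum.nonneg f m J) (by positivity)
    · have hsplit := sum_Ioc_consecutive f (Nat.le_add_right m (2 ^ J)) (le_of_not_ge hhalf)
      have hright := ih (m := m + 2 ^ J) (by omega) (by rw [pow_succ] at hn; omega)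
      rw [← hsplit]
      calc _ ≤ (J + 1 + 1) * ((∑ k ∈ Ioc m (m + 2 ^ J), f k) ^ 2
              + dyadicSquareSum f (m + 2 ^ J) J) := add_sq_le_of_sq_le (by positivity) hright
        _ ≤ (J + 1 + 1) * dyadicSquareSum f m (J + 1) := by
          gcongr
          exact (add_le_add_left (dyadicSquareSum.sq_sum_le f m J) _).trans
            (dyadicSquareSum.add_le_succ f m J)

section Integral

variable {Y : Type*} [MeasurableSpace Y] {μ : Measure Y} {F : ℕ → Y → ℝ}

theorem integrable_dyadicSquareSum
    (hF : ∀ m n, Integrable (fun y ↦ (∑ k ∈ Ioc m n, F k y) ^ 2) μ) (m J : ℕ) :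
    Integrable (fun y ↦ dyadicSquareSum (F · y) m J) μ :=
  integrable_finsetSum _ fun _ _ ↦ integrable_finsetSum _ fun _ _ ↦ hF _ _

theorem integral_dyadicSquareSum_le
    (hF : ∀ m n, Integrable (fun y ↦ (∑ k ∈ Ioc m n, F k y) ^ 2) μ) {Φ : ℕ → ℝ}
    (hΦ : ∀ m n, m < n → ∫ y, (∑ k ∈ Ioc m n, F k y) ^ 2 ∂μ ≤ Φ n - Φ m) (m J : ℕ) :
    ∫ y, dyadicSquareSum (F · y) m J ∂μ ≤ (J + 1) * (Φ (m + 2 ^ J) - Φ m) := by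
  unfold dyadicSquareSum
  rw [integral_finsetSum _ fun _ _ ↦ integrable_finsetSum _ fun _ _ ↦ hF _ _]
  calc _ ≤ ∑ _j ∈ range (J + 1), (Φ (m + 2 ^ J) - Φ m) := sum_le_sum fun j hj ↦ ?_
    _ = _ := by simp [mul_sub]
  have hscale : 2 ^ (J - j) * 2 ^ j = 2 ^ J := by
    rw [← pow_add, Nat.sub_add_cancel (Nat.lt_succ_iff.1 (mem_range.1 hj))]
  rw [integral_finsetSum _ fun _ _ ↦ hF _ _]
  calc _ ≤ ∑ i ∈ range (2 ^ (J - j)), (Φ (m + (i + 1) * 2 ^ j) - Φ (m + i * 2 ^ j)) :=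
        sum_le_sum fun i _ ↦ hΦ _ _ (by gcongr; omega)
    _ = Φ (m + 2 ^ J) - Φ m := by
        rw [sum_range_sub (fun i ↦ Φ (m + i * 2 ^ j)), hscale, zero_mul, add_zero]

theorem ae_tendsto_zero_of_summable_integral {g : ℕ → Y → ℝ} (hg : ∀ n y, 0 ≤ g n y)
    (hint : ∀ n, Integrable (g n) μ) (hsum : Summable fun n ↦ ∫ y, g n y ∂μ) :
    ∀ᵐ y ∂μ, Tendsto (fun n ↦ g n y) atTop (𝓝 0) := by
  have hmeas : ∀ n, AEMeasurable (fun y ↦ ENNReal.ofReal (g n y)) μ :=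
    fun n ↦ (hint n).aemeasurable.ennreal_ofReal
  have hlint : ∫⁻ y, ∑' n, ENNReal.ofReal (g n y) ∂μ ≠ ⊤ := by
    rw [lintegral_tsum hmeas]
    simp_rw [← ofReal_integral_eq_lintegral_ofReal (hint _) (ae_of_all _ (hg _)),
      ← ENNReal.ofReal_tsum_of_nonneg (fun n ↦ integral_nonneg (hg n)) hsum]
    exact ENNReal.ofReal_ne_top
  filter_upwards [ae_lt_top' (AEMeasurable.tsum hmeas) hlint] with y hy
  exact ((ENNReal.tendsto_toReal ENNReal.zero_ne_top).comp
    (ENNReal.tendsto_atTop_zero_of_tsum_ne_top hy.ne)).congr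
    fun n ↦ ENNReal.toReal_ofReal (hg n y)

end Integral

theorem tendsto_zero_of_sq_le {s g : ℕ → ℝ} (hg : Tendsto g atTop (𝓝 0))
    (hsg : ∀ᶠ n in atTop, s n ^ 2 ≤ g n) : Tendsto s atTop (𝓝 0) := by
  refine squeeze_zero_norm' (hsg.mono fun n hn ↦ ?_) (by simpa using hg.sqrt)
  exact Real.abs_le_sqrt hn

theorem tendsto_natLog_atTop {b : ℕ} (hb : 1 < b) : Tendsto (Nat.log b) atTop atTop :=
  tendsto_atTop_atTop_of_monotone Nat.log_monotone fun k ↦ ⟨b ^ k, (Nat.log_pow hb k).ge⟩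

theorem summable_add_two_sq_div_rpow {p : ℝ} (hp : 3 < p) :
    Summable fun K : ℕ ↦ ((K : ℝ) + 2) ^ 2 / (K : ℝ) ^ p := by
  refine Summable.of_norm_bounded_eventually_nat
    ((Real.summable_nat_rpow.2 (by linarith : 2 - p < -1)).mul_left 9) ?_
  filter_upwards [eventually_ge_atTop 1] with K hK
  have hK : (1 : ℝ) ≤ K := by exact_mod_cast hK
  have hKp : 0 < (K : ℝ) ^ p := by positivity
  rw [Real.norm_of_nonneg (by positivity), Real.rpow_sub (by positivity), Real.rpow_two,
    ← mul_div_assoc, div_le_div_iff_of_pos_right hKp]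
  nlinarith

noncomputable def normalizer (a b x : ℝ) : ℝ := x ^ a * Real.log x ^ b

namespace normalizer

theorem pos {a b x : ℝ} (hx : 1 < x) : 0 < normalizer a b x :=
  mul_pos (by positivity) (Real.rpow_pos_of_pos (Real.log_pos hx) b)

theorem mono {a b x y : ℝ} (ha : 0 ≤ a) (hb : 0 ≤ b) (hx : 1 ≤ x) (hxy : x ≤ y) :
    normalizer a b x ≤ normalizer a b y := by
  have hlog := Real.log_nonneg hx
  unfold normalizer
  exact mul_le_mul (by gcongr) (by gcongr) (by positivity) (Real.rpow_nonneg (by linarith) a)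

theorem sq_two_pow (a b : ℝ) (K : ℕ) :
    normalizer a b (2 ^ K) ^ 2 = ((2 : ℝ) ^ K) ^ (2 * a) * ((K : ℝ) * Real.log 2) ^ (2 * b) := by
  have hlog : 0 ≤ (K : ℝ) * Real.log 2 := by positivity
  rw [normalizer, Real.log_pow, mul_pow, ← Real.rpow_mul_natCast (by positivity),
    ← Real.rpow_mul_natCast hlog]
  ring_nf

end normalizer

theorem summable_sq_mul_rpow_div_normalizer_sq {b : ℝ} (hb : 3 / 2 < b) (σ : ℝ) :
    Summable fun K : ℕ ↦
      ((K : ℝ) + 2) ^ 2 * ((2 : ℝ) ^ (K + 1)) ^ σ / normalizer (σ / 2) b (2 ^ K) ^ 2 := by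
  refine Summable.of_norm_bounded_eventually_nat
    ((summable_add_two_sq_div_rpow (by linarith : 3 < 2 * b)).mul_left
      ((2 : ℝ) ^ σ / Real.log 2 ^ (2 * b))) ?_
  filter_upwards [eventually_ge_atTop 1] with K hK
  have hK : (0 : ℝ) < K := by exact_mod_cast hK
  have h2K : (0 : ℝ) < ((2 : ℝ) ^ K) ^ σ := by positivity
  rw [normalizer.sq_two_pow, pow_succ (2 : ℝ) K, Real.mul_rpow (by positivity) zero_le_two,
    Real.mul_rpow hK.le (Real.log_pos one_lt_two).le, show 2 * (σ / 2) = σ by ring,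
    Real.norm_of_nonneg (by positivity)]
  apply le_of_eq
  field_simp

theorem sq_sum_Icc_div_normalizer_le (f : ℕ → ℝ) {a b : ℝ} (ha : 0 ≤ a) (hb : 0 ≤ b) {n : ℕ}
    (hn : 2 ≤ n) :
    ((∑ k ∈ Icc 1 n, f k) / normalizer a b n) ^ 2 ≤
      (Nat.log 2 n + 2) * dyadicSquareSum f 0 (Nat.log 2 n + 1) /
        normalizer a b (2 ^ Nat.log 2 n) ^ 2 := by
  set K := Nat.log 2 n
  have hK : 0 < K := Nat.log_pos one_lt_two hn
  have hlow : (2 : ℝ) ^ K ≤ n := by exact_mod_cast Nat.pow_log_le_self 2 (by omega)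
  have hpos : 0 < normalizer a b (2 ^ K) := normalizer.pos (one_lt_pow₀ one_lt_two hK.ne')
  have hsum : (∑ k ∈ Icc 1 n, f k) ^ 2 ≤ (K + 2) * dyadicSquareSum f 0 (K + 1) := by
    have := sq_sum_Ioc_le_mul_dyadicSquareSum f (K + 1) (by omega : 0 < n)
      (by simpa using (Nat.lt_pow_succ_log_self one_lt_two n).le)
    rw [← Icc_add_one_left_eq_Ioc] at this
    push_cast at this
    linarith
  rw [div_pow]
  refine div_le_div₀ (mul_nonneg (by positivity) (dyadicSquareSum.nonneg f 0 _)) hsum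
    (by positivity) ?_
  gcongr
  exact normalizer.mono ha hb (one_le_pow₀ one_le_two) hlow

theorem quantitative_pointwise_tool_general
    {Y : Type*} [MeasurableSpace Y] (ν : Measure Y)
    (F : ℕ → Y → ℝ)
    (hFL2 : ∀ k : ℕ, 1 ≤ k → MemLp (F k) 2 ν)
    (C σ : ℝ) (hσ : 0 < σ)
    (hbound : ∀ m n : ℕ, m < n →
      ∫ y, (∑ k ∈ Finset.Ioc m n, F k y) ^ 2 ∂ν ≤ C * ((n : ℝ) ^ σ - (m : ℝ) ^ σ)) :
    ∀ ε : ℝ, 0 < ε →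
      ∀ᵐ y ∂ν, Tendsto
        (fun N : ℕ => (∑ k ∈ Finset.Icc 1 N, F k y) /
          ((N : ℝ) ^ (σ / 2) * Real.log N ^ ((3 : ℝ) / 2 + ε)))
        atTop (nhds 0) := by
  intro ε hε
  have hblock : ∀ m n, Integrable (fun y ↦ (∑ k ∈ Ioc m n, F k y) ^ 2) ν := fun m n ↦
    (memLp_finsetSum _ fun k hk ↦ hFL2 k (Nat.one_le_of_lt (mem_Ioc.1 hk).1)).integrable_sq
  have hS (J : ℕ) : ∫ y, dyadicSquareSum (F · y) 0 J ∂ν ≤ (J + 1) * (C * ((2 : ℝ) ^ J) ^ σ) := by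
    simpa [Real.zero_rpow hσ.ne', mul_sub] using
      integral_dyadicSquareSum_le hblock (Φ := fun n ↦ C * (n : ℝ) ^ σ)
        (fun m n h ↦ (hbound m n h).trans_eq (mul_sub _ _ _)) 0 J
  set g : ℕ → Y → ℝ := fun K y ↦ (K + 2) * dyadicSquareSum (F · y) 0 (K + 1) /
    normalizer (σ / 2) (3 / 2 + ε) (2 ^ K) ^ 2
  have hg (K : ℕ) (y : Y) : 0 ≤ g K y :=
    div_nonneg (mul_nonneg (by positivity) (dyadicSquareSum.nonneg _ _ _)) (sq_nonneg _)
  have hint (K : ℕ) : Integrable (g K) ν :=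
    ((integrable_dyadicSquareSum hblock 0 _).const_mul _).div_const _
  have hsum : Summable fun K ↦ ∫ y, g K y ∂ν := by
    refine ((summable_sq_mul_rpow_div_normalizer_sq (b := 3 / 2 + ε) (by linarith) σ).mul_left
      C).of_nonneg_of_le (fun K ↦ integral_nonneg (hg K)) fun K ↦ ?_
    rw [integral_div, integral_const_mul]
    calc _ ≤ (K + 2) * ((K + 1 + 1) * (C * ((2 : ℝ) ^ (K + 1)) ^ σ)) /
          normalizer (σ / 2) (3 / 2 + ε) (2 ^ K) ^ 2 := by
          gcongr
          exact_mod_cast hS (K + 1)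
      _ = _ := by ring
  filter_upwards [ae_tendsto_zero_of_summable_integral hg hint hsum] with y hy
  exact tendsto_zero_of_sq_le (hy.comp (tendsto_natLog_atTop one_lt_two))
    ((eventually_ge_atTop 2).mono fun n hn ↦
      sq_sum_Icc_div_normalizer_le _ (by positivity) (by positivity) hn)

theorem quantitative_pointwise_tool
    {Y : Type*} [MeasurableSpace Y] (ν : Measure Y) [IsProbabilityMeasure ν]
    (F : ℕ → Y → ℝ)
    (hFmeas : ∀ k : ℕ, 1 ≤ k → Measurable (F k))
    (hFL2 : ∀ k : ℕ, 1 ≤ k → MemLp (F k) 2 ν)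
    (C σ : ℝ) (hC : 0 < C) (hσ : 0 < σ)
    (hbound : ∀ m n : ℕ, m < n →
      ∫ y, (∑ k ∈ Finset.Ioc m n, F k y) ^ 2 ∂ν ≤ C * ((n : ℝ) ^ σ - (m : ℝ) ^ σ)) :
    ∀ ε : ℝ, 0 < ε →
      ∀ᵐ y ∂ν, Tendsto
        (fun N : ℕ => (∑ k ∈ Finset.Icc 1 N, F k y) /
          ((N : ℝ) ^ (σ / 2) * Real.log N ^ ((3 : ℝ) / 2 + ε)))
        atTop (nhds 0) :=
  quantitative_pointwise_tool_general ν F hFL2 C σ hσ hbound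
end

section
/- Let (X, μ, h) be a probability measure preserving system. Let 𝓛 be a linear subspace of L²(X, μ) containing the constant functions and let ‖·‖_𝓛 be a norm on 𝓛. Suppose there exist δ, C > 0 such that for every φ ∈ L^∞(X, μ), every ψ ∈ 𝓛 and every n ∈ ℕ, |∫_X φ(h^n x) ψ(x) dμ(x) − ∫_X φ dμ · ∫_X ψ dμ| ≤ C ‖φ‖_{L^∞} ‖ψ‖_𝓛 n^{−δ}. Then for every k ∈ ℕ, the system (X, μ, h) is k-mixing with rate n^{−δ} for the vector space 𝓛 ∩ L^∞(X, μ): for any f_0, f_1, …, f_k ∈ 𝓛 ∩ L^∞(X, μ) there is a constant C' (depending on the functions) such that for all pairwise distinct n_0, n_1, …, n_k ∈ ℕ, |∫_X f_0(h^{n_0}x) ⋯ f_k(h^{n_k}x) dμ − μ(f_0) ⋯ μ(f_k)| ≤ C' (min_{i≠j} |n_i − n_j|)^{−δ}. -/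
/-!
Induction on the number of functions. Let `n_j` be the smallest time and `n_j + g` the next
one, so that `g` is at least the minimal gap. By invariance of `μ` the correlation equals
`∫ φ ∘ h^g · f_j dμ`, where `φ = ∏_{i ≠ j} f_i ∘ h^(n_i - n_j - g)` has `L^∞` norm at most
`∏_{i ≠ j} ‖f_i‖_∞`. The decay hypothesis for the pair `(φ, f_j)` replaces this integral by
`μ(φ) μ(f_j)` up to `O(g^(-δ))`, and `μ(φ) - ∏_{i ≠ j} μ(f_i)` is a correlation of one function
fewer whose times are a shift of the `n_i`, `i ≠ j`, so their gaps are no smaller.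
-/

open MeasureTheory Filter

/-- `min_{i ≠ j} |n_i - n_j|` for a tuple of natural numbers. -/
noncomputable def minGapNat {k : ℕ} (n : Fin k → ℕ) : ℕ :=
  sInf {d : ℕ | ∃ i j, i ≠ j ∧ d = ((n i : ℤ) - (n j : ℤ)).natAbs}

lemma minGapNat_le {k : ℕ} (n : Fin k → ℕ) {i j : Fin k} (hij : i ≠ j) :
    minGapNat n ≤ ((n i : ℤ) - (n j : ℤ)).natAbs :=
  Nat.sInf_le ⟨i, j, hij, rfl⟩

lemma exists_eq_minGapNat {k : ℕ} {n : Fin k → ℕ}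
    (hn : (∃ i j : Fin k, i ≠ j) ∨ minGapNat n ≠ 0) :
    ∃ i j, i ≠ j ∧ minGapNat n = ((n i : ℤ) - (n j : ℤ)).natAbs := by
  show minGapNat n ∈ {d : ℕ | ∃ i j, i ≠ j ∧ d = ((n i : ℤ) - (n j : ℤ)).natAbs}
  refine Nat.sInf_mem ?_
  rcases hn with ⟨i, j, hij⟩ | hn
  · exact ⟨_, i, j, hij, rfl⟩
  · exact Set.nonempty_iff_ne_empty.2 fun h ↦ hn <| by rw [minGapNat, h, Nat.sInf_empty]

lemma minGapNat_pos {k : ℕ} {n : Fin k → ℕ} (hn : Function.Injective n) (hk : 1 < k) :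
    0 < minGapNat n := by
  obtain ⟨i, j, hij, hd⟩ :=
    exists_eq_minGapNat (n := n) (.inl ⟨⟨0, by omega⟩, ⟨1, hk⟩, by simp [Fin.ext_iff]⟩)
  have := hn.ne hij
  omega

lemma rpow_neg_minGapNat_le_of_shift {k l : ℕ} {n : Fin l → ℕ} {m : Fin k → ℕ}
    {e : Fin k → Fin l} (he : Function.Injective e) {c : ℕ} (hnm : ∀ i, n (e i) = m i + c)
    (hn : 0 < minGapNat n) {δ : ℝ} (hδ : 0 < δ) :
    (minGapNat m : ℝ) ^ (-δ) ≤ (minGapNat n : ℝ) ^ (-δ) := by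
  rcases eq_or_ne (minGapNat m) 0 with hm | hm
  · -- `Real.rpow` has `0 ^ (-δ) = 0`
    rw [hm, Nat.cast_zero, Real.zero_rpow (by linarith)]
    positivity
  obtain ⟨a, b, hab, hd⟩ := exists_eq_minGapNat (.inr hm)
  have hle : minGapNat n ≤ minGapNat m := by
    have := minGapNat_le n (he.ne hab)
    rw [hnm, hnm] at this
    omega
  exact Real.rpow_le_rpow_of_nonpos (by exact_mod_cast hn) (by exact_mod_cast hle) (by linarith)

lemma exists_succAbove_shift {k : ℕ} (n : Fin (k + 2) → ℕ) :
    ∃ (j : Fin (k + 2)) (g : ℕ) (m : Fin (k + 1) → ℕ),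
      minGapNat n ≤ g ∧ ∀ i, n (j.succAbove i) = m i + g + n j := by
  obtain ⟨j, -, hj⟩ := Finset.exists_min_image Finset.univ n Finset.univ_nonempty
  obtain ⟨i₀, -, hi₀⟩ := Finset.exists_min_image Finset.univ (n ∘ j.succAbove)
    Finset.univ_nonempty
  refine ⟨j, n (j.succAbove i₀) - n j, fun i ↦ n (j.succAbove i) - n (j.succAbove i₀), ?_,
    fun i ↦ ?_⟩
  · have := minGapNat_le n (j.succAbove_ne i₀)
    have := hj (j.succAbove i₀) (Finset.mem_univ _)
    omega
  · have := hj (j.succAbove i₀) (Finset.mem_univ _)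
    have := hi₀ i (Finset.mem_univ _)
    dsimp only [Function.comp_apply] at this ⊢
    omega

lemma MeasureTheory.MeasurePreserving.integral_comp_of_aestronglyMeasurable {α β G : Type*}
    [MeasurableSpace α] [MeasurableSpace β] [NormedAddCommGroup G] [NormedSpace ℝ G]
    {μ : Measure α} {ν : Measure β} {f : α → β} (hf : MeasurePreserving f μ ν) {g : β → G}
    (hg : AEStronglyMeasurable g ν) : ∫ x, g (f x) ∂μ = ∫ y, g y ∂ν := by
  rw [← integral_map hf.aemeasurable (hf.map_eq ▸ hg), hf.map_eq]

lemma eLpNorm_top_prod_le {α ι R : Type*} [MeasurableSpace α] [NormedCommRing R]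
    [NormMulClass R] [NormOneClass R] {μ : Measure α} (s : Finset ι) (F : ι → α → R) :
    eLpNorm (∏ i ∈ s, F i) ⊤ μ ≤ ∏ i ∈ s, eLpNorm (F i) ⊤ μ := by
  classical
  induction s using Finset.induction_on with
  | empty =>
    simp only [Finset.prod_empty, eLpNorm_exponent_top, eLpNormEssSup_eq_essSup_enorm]
    exact essSup_le_of_ae_le _ (ae_of_all _ fun x ↦ by simp)
  | insert a s ha ih =>
    rw [Finset.prod_insert ha, Finset.prod_insert ha]
    calc eLpNorm (F a * ∏ i ∈ s, F i) ⊤ μ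
        ≤ eLpNorm (F a) ⊤ μ * eLpNorm (∏ i ∈ s, F i) ⊤ μ := by
          simp only [eLpNorm_exponent_top, eLpNormEssSup_eq_essSup_enorm, Pi.mul_apply,
            enorm_mul]
          exact ENNReal.essSup_mul_le _ _
      _ ≤ _ := by gcongr

section Correlation

variable {X : Type*} [MeasurableSpace X]

noncomputable def multipleCorrelation (μ : Measure X) (h : X → X) {k : ℕ}
    (f : Fin k → X → ℝ) (n : Fin k → ℕ) : ℝ :=
  (∫ x, ∏ i, f i (h^[n i] x) ∂μ) - ∏ i, ∫ x, f i x ∂μ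

def HasCorrelationDecay (μ : Measure X) (h : X → X) (L : Set (X → ℝ))
    (nrm : (X → ℝ) → ℝ) (C δ : ℝ) : Prop :=
  ∀ φ : X → ℝ, Measurable φ → MemLp φ ⊤ μ → ∀ ψ ∈ L, ∀ n : ℕ, 1 ≤ n →
    |(∫ x, φ (h^[n] x) * ψ x ∂μ) - (∫ x, φ x ∂μ) * ∫ x, ψ x ∂μ| ≤
      C * (eLpNorm φ ⊤ μ).toReal * nrm ψ * (n : ℝ) ^ (-δ)

variable {μ : Measure X} {h : X → X}

lemma integral_prod_iterate_eq_integral_mul {k : ℕ} (hh : MeasurePreserving h μ μ)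
    {f : Fin (k + 1) → X → ℝ} (hf : ∀ i, Measurable (f i)) {n : Fin (k + 1) → ℕ}
    {j : Fin (k + 1)} {g : ℕ} {m : Fin k → ℕ} (hnm : ∀ i, n (j.succAbove i) = m i + g + n j) :
    ∫ x, ∏ i, f i (h^[n i] x) ∂μ =
      ∫ x, (∏ i, f (j.succAbove i) (h^[m i] (h^[g] x))) * f j x ∂μ := by
  have hiter (l : ℕ) : Measurable h^[l] := hh.measurable.iterate l
  have hF : Measurable fun x ↦ (∏ i, f (j.succAbove i) (h^[m i] (h^[g] x))) * f j x :=
    (Finset.measurable_prod _ fun i _ ↦ (hf _).comp ((hiter _).comp (hiter g))).mul (hf j)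
  rw [← (hh.iterate (n j)).integral_comp_of_aestronglyMeasurable hF.aestronglyMeasurable]
  congr 1 with x
  rw [Fin.prod_univ_succAbove _ j, mul_comm]
  simp only [← Function.iterate_add_apply, hnm, add_assoc]

variable {L : Set (X → ℝ)} {nrm : (X → ℝ) → ℝ} {C δ : ℝ}

lemma abs_multipleCorrelation_le {k : ℕ} (hh : MeasurePreserving h μ μ)
    (hL : ∀ f ∈ L, Measurable f) (hdecay : HasCorrelationDecay μ h L nrm C δ)
    {f : Fin (k + 1) → X → ℝ} (hf : ∀ i, f i ∈ L ∧ MemLp (f i) ⊤ μ) {n : Fin (k + 1) → ℕ}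
    {j : Fin (k + 1)} {g : ℕ} {m : Fin k → ℕ} (hg : 1 ≤ g)
    (hnm : ∀ i, n (j.succAbove i) = m i + g + n j) :
    |multipleCorrelation μ h f n| ≤
      |C| * (∏ i, (eLpNorm (f (j.succAbove i)) ⊤ μ).toReal) * |nrm (f j)| * (g : ℝ) ^ (-δ) +
        |∫ x, f j x ∂μ| * |multipleCorrelation μ h (fun i ↦ f (j.succAbove i)) m| := by
  set φ : X → ℝ := fun y ↦ ∏ i, f (j.succAbove i) (h^[m i] y)
  have hφmeas : Measurable φ :=
    Finset.measurable_prod _ fun i _ ↦ (hL _ (hf _).1).comp (hh.measurable.iterate _)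
  have hφnorm : eLpNorm φ ⊤ μ ≤ ∏ i, eLpNorm (f (j.succAbove i)) ⊤ μ :=
    calc eLpNorm φ ⊤ μ = eLpNorm (∏ i, f (j.succAbove i) ∘ h^[m i]) ⊤ μ := by
          congr 1 with x
          simp [φ, Finset.prod_apply]
      _ ≤ ∏ i, eLpNorm (f (j.succAbove i) ∘ h^[m i]) ⊤ μ := eLpNorm_top_prod_le _ _
      _ = ∏ i, eLpNorm (f (j.succAbove i)) ⊤ μ := Finset.prod_congr rfl fun i _ ↦
          eLpNorm_comp_measurePreserving (hf _).2.1 (hh.iterate _)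
  have hfin : ∏ i, eLpNorm (f (j.succAbove i)) ⊤ μ ≠ ⊤ :=
    ENNReal.prod_ne_top fun i _ ↦ (hf _).2.eLpNorm_ne_top
  have hφmem : MemLp φ ⊤ μ := ⟨hφmeas.aestronglyMeasurable, hφnorm.trans_lt hfin.lt_top⟩
  have hφnorm' : (eLpNorm φ ⊤ μ).toReal ≤ ∏ i, (eLpNorm (f (j.succAbove i)) ⊤ μ).toReal := by
    rw [← ENNReal.toReal_prod]
    exact ENNReal.toReal_mono hfin hφnorm
  have hsplit : multipleCorrelation μ h f n =
      ((∫ x, φ (h^[g] x) * f j x ∂μ) - (∫ x, φ x ∂μ) * ∫ x, f j x ∂μ) +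
        (∫ x, f j x ∂μ) * multipleCorrelation μ h (fun i ↦ f (j.succAbove i)) m := by
    rw [multipleCorrelation, integral_prod_iterate_eq_integral_mul hh (fun i ↦ hL _ (hf i).1) hnm,
      Fin.prod_univ_succAbove _ j, multipleCorrelation]
    ring
  rw [hsplit]
  refine (abs_add_le _ _).trans ?_
  rw [abs_mul]
  gcongr
  refine (hdecay φ hφmeas hφmem (f j) (hf j).1 g hg).trans ((le_abs_self _).trans ?_)
  rw [abs_mul, abs_mul, abs_mul, abs_of_nonneg ENNReal.toReal_nonneg,
    abs_of_nonneg (by positivity : (0 : ℝ) ≤ (g : ℝ) ^ (-δ))]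
  gcongr

theorem exists_abs_multipleCorrelation_le (hh : MeasurePreserving h μ μ)
    (hL : ∀ f ∈ L, Measurable f) (hδ : 0 < δ) (hdecay : HasCorrelationDecay μ h L nrm C δ)
    (k : ℕ) (f : Fin (k + 1) → X → ℝ) (hf : ∀ i, f i ∈ L ∧ MemLp (f i) ⊤ μ) :
    ∃ C' : ℝ, 0 ≤ C' ∧ ∀ n : Fin (k + 1) → ℕ, Function.Injective n →
      |multipleCorrelation μ h f n| ≤ C' * (minGapNat n : ℝ) ^ (-δ) := by
  induction k with
  | zero =>
    refine ⟨0, le_rfl, fun n _ ↦ ?_⟩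
    simp [multipleCorrelation, (hh.iterate _).integral_comp_of_aestronglyMeasurable (hf 0).2.1]
  | succ k ih =>
    choose Cj hCj_nonneg hCj using fun j : Fin (k + 2) ↦
      ih (fun i ↦ f (j.succAbove i)) fun i ↦ hf _
    set A : Fin (k + 2) → ℝ := fun j ↦
      |C| * (∏ i, (eLpNorm (f (j.succAbove i)) ⊤ μ).toReal) * |nrm (f j)| + |∫ x, f j x ∂μ| * Cj j
    have hA_nonneg (j) : 0 ≤ A j := by have := hCj_nonneg j; positivity
    refine ⟨∑ j, A j, Finset.sum_nonneg fun j _ ↦ hA_nonneg j, fun n hn ↦ ?_⟩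
    obtain ⟨j, g, m, hgap, hnm⟩ := exists_succAbove_shift n
    have hgap_pos : 0 < minGapNat n := minGapNat_pos hn (by omega)
    have hm : Function.Injective m := fun a b hab ↦
      Fin.succAbove_right_injective (hn (by rw [hnm, hnm, hab]))
    have hg : (g : ℝ) ^ (-δ) ≤ (minGapNat n : ℝ) ^ (-δ) :=
      Real.rpow_le_rpow_of_nonpos (by exact_mod_cast hgap_pos) (by exact_mod_cast hgap)
        (by linarith)
    have hIH : |multipleCorrelation μ h (fun i ↦ f (j.succAbove i)) m| ≤
        Cj j * (minGapNat n : ℝ) ^ (-δ) :=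
      (hCj j m hm).trans <| mul_le_mul_of_nonneg_left (rpow_neg_minGapNat_le_of_shift
        Fin.succAbove_right_injective (fun i ↦ by rw [hnm, add_assoc]) hgap_pos hδ) (hCj_nonneg j)
    calc |multipleCorrelation μ h f n|
        ≤ |C| * (∏ i, (eLpNorm (f (j.succAbove i)) ⊤ μ).toReal) * |nrm (f j)| * (g : ℝ) ^ (-δ) +
          |∫ x, f j x ∂μ| * |multipleCorrelation μ h (fun i ↦ f (j.succAbove i)) m| :=
          abs_multipleCorrelation_le hh hL hdecay hf (by omega) hnm
      _ ≤ A j * (minGapNat n : ℝ) ^ (-δ) := by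
          rw [add_mul, mul_assoc _ (Cj j)]
          gcongr
      _ ≤ (∑ j, A j) * (minGapNat n : ℝ) ^ (-δ) := by
          gcongr
          exact Finset.single_le_sum (fun i _ ↦ hA_nonneg i) (Finset.mem_univ j)

end Correlation

theorem multiple_mixing_of_effective_decay_general
    {X : Type*} [MeasurableSpace X] (μ : Measure X)
    (h : X → X) (hpres : MeasurePreserving h μ μ)
    (𝓛 : Submodule ℝ (X → ℝ))
    (h𝓛meas : ∀ f ∈ 𝓛, Measurable f)
    (nrm : (X → ℝ) → ℝ)
    (δ C : ℝ) (hδ : 0 < δ)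
    (hcorr : ∀ φ : X → ℝ, Measurable φ → MemLp φ ⊤ μ → ∀ ψ ∈ 𝓛, ∀ n : ℕ, 1 ≤ n →
      |(∫ x, φ (h^[n] x) * ψ x ∂μ) - (∫ x, φ x ∂μ) * ∫ x, ψ x ∂μ| ≤
        C * (eLpNorm φ ⊤ μ).toReal * nrm ψ * (n : ℝ) ^ (-δ)) :
    ∀ k : ℕ, 1 ≤ k →
      ∀ f : Fin (k + 1) → X → ℝ, (∀ i, f i ∈ 𝓛 ∧ MemLp (f i) ⊤ μ) →
        ∃ C' : ℝ, ∀ n : Fin (k + 1) → ℕ, (∀ i, 1 ≤ n i) → Function.Injective n →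
          |(∫ x, ∏ i, f i (h^[n i] x) ∂μ) - ∏ i, ∫ x, f i x ∂μ| ≤
            C' * (minGapNat n : ℝ) ^ (-δ) := by
  intro k _ f hf
  obtain ⟨C', -, hC'⟩ := exists_abs_multipleCorrelation_le hpres h𝓛meas hδ hcorr k f hf
  exact ⟨C', fun n _ hn ↦ hC' n hn⟩

theorem multiple_mixing_of_effective_decay
    {X : Type*} [MeasurableSpace X] (μ : Measure X) [IsProbabilityMeasure μ]
    (h : X → X) (hmeas : Measurable h) (hpres : MeasurePreserving h μ μ)
    (𝓛 : Submodule ℝ (X → ℝ))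
    (h𝓛meas : ∀ f ∈ 𝓛, Measurable f)
    (h𝓛L2 : ∀ f ∈ 𝓛, MemLp f 2 μ)
    (h𝓛const : (fun _ : X => (1 : ℝ)) ∈ 𝓛)
    (nrm : (X → ℝ) → ℝ)
    (hnrm_nonneg : ∀ ψ ∈ 𝓛, 0 ≤ nrm ψ)
    (hnrm_definite : ∀ ψ ∈ 𝓛, nrm ψ = 0 → ψ = 0)
    (hnrm_smul : ∀ (a : ℝ), ∀ ψ ∈ 𝓛, nrm (a • ψ) = |a| * nrm ψ)
    (hnrm_add : ∀ ψ₁ ∈ 𝓛, ∀ ψ₂ ∈ 𝓛, nrm (ψ₁ + ψ₂) ≤ nrm ψ₁ + nrm ψ₂)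
    (δ C : ℝ) (hδ : 0 < δ) (hC : 0 < C)
    (hcorr : ∀ φ : X → ℝ, Measurable φ → MemLp φ ⊤ μ → ∀ ψ ∈ 𝓛, ∀ n : ℕ, 1 ≤ n →
      |(∫ x, φ (h^[n] x) * ψ x ∂μ) - (∫ x, φ x ∂μ) * ∫ x, ψ x ∂μ| ≤
        C * (eLpNorm φ ⊤ μ).toReal * nrm ψ * (n : ℝ) ^ (-δ)) :
    ∀ k : ℕ, 1 ≤ k →
      ∀ f : Fin (k + 1) → X → ℝ, (∀ i, f i ∈ 𝓛 ∧ MemLp (f i) ⊤ μ) →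
        ∃ C' : ℝ, ∀ n : Fin (k + 1) → ℕ, (∀ i, 1 ≤ n i) → Function.Injective n →
          |(∫ x, ∏ i, f i (h^[n i] x) ∂μ) - ∏ i, ∫ x, f i x ∂μ| ≤
            C' * (minGapNat n : ℝ) ^ (-δ) :=
  multiple_mixing_of_effective_decay_general μ h hpres 𝓛 h𝓛meas nrm δ C hδ hcorr
end

section
/- Let c : ℕ → [1, ∞] and M ≥ 1 be such that |{k ∈ ℕ : c(k) ≤ n}| ≤ M n for all n ∈ ℕ, and let δ > 0. Then for all nonnegative integers m < n, Σ_{m < t ≤ n} c(t)^{−δ} ≤ 2^δ M^δ Σ_{t=1}^{n−m} t^{−δ} (with the convention ∞^{−δ} = 0). -/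
open scoped ENNReal

theorem counting_bound_gives_sum_bound
    (c : ℕ → ℝ≥0∞) (hc : ∀ k : ℕ, 1 ≤ k → 1 ≤ c k)
    (M : ℝ) (hM : 1 ≤ M)
    (hcard : ∀ n : ℕ, 1 ≤ n → ∀ s : Finset ℕ,
      (∀ k ∈ s, 1 ≤ k ∧ c k ≤ (n : ℝ≥0∞)) → (s.card : ℝ) ≤ M * n)
    (δ : ℝ) (hδ : 0 < δ) :
    ∀ m n : ℕ, m < n →
      ∑ t ∈ Finset.Ioc m n, (c t ^ (-δ)).toReal ≤
        (2 : ℝ) ^ δ * M ^ δ * ∑ t ∈ Finset.Icc 1 (n - m), (t : ℝ) ^ (-δ) := by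
  classical
  intro m n hmn
  have hM0 : (0:ℝ) < M := lt_of_lt_of_le one_pos hM
  set S := Finset.Ioc m n with hS
  set F := S.filter (fun t => c t ≠ ⊤) with hF
  have hFmem : ∀ t ∈ F, m < t ∧ t ≤ n ∧ c t ≠ ⊤ := by
    intro t ht
    simp only [hF, hS, Finset.mem_filter, Finset.mem_Ioc] at ht
    tauto
  have hF1 : ∀ t ∈ F, 1 ≤ t := by
    intro t ht; have := (hFmem t ht).1; omega
  -- rank function
  set rank : ℕ → ℕ := fun t =>
    (F.filter (fun s => c s < c t ∨ (c s = c t ∧ s ≤ t))).card with hrank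
  have hself : ∀ t ∈ F, t ∈ F.filter (fun s => c s < c t ∨ (c s = c t ∧ s ≤ t)) := by
    intro t ht
    simp [Finset.mem_filter, ht]
  have hrank1 : ∀ t ∈ F, 1 ≤ rank t := by
    intro t ht
    exact Finset.card_pos.mpr ⟨t, hself t ht⟩
  have hrankcard : ∀ t ∈ F, rank t ≤ n - m := by
    intro t ht
    calc rank t ≤ F.card := Finset.card_filter_le _ _
    _ ≤ S.card := Finset.card_filter_le _ _
    _ = n - m := Nat.card_Ioc m n
  -- strict monotonicity wrt lex order
  have hmono : ∀ a ∈ F, ∀ b ∈ F, (c a < c b ∨ (c a = c b ∧ a < b)) → rank a < rank b := by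
    intro a ha b hb hab
    apply Finset.card_lt_card
    constructor
    · intro s hs
      simp only [Finset.mem_filter] at hs ⊢
      refine ⟨hs.1, ?_⟩
      rcases hs.2 with h1 | ⟨h1, h2⟩
      · rcases hab with h | ⟨h, _⟩
        · exact Or.inl (h1.trans h)
        · exact Or.inl (h ▸ h1)
      · rcases hab with h | ⟨h, h3⟩
        · exact Or.inl (h1 ▸ h)
        · exact Or.inr ⟨h1.trans h, h2.trans h3.le⟩
    · intro hsub
      have hbmem := hself b hb
      have := hsub hbmem
      simp only [Finset.mem_filter] at this
      rcases this.2 with h | ⟨h, h2⟩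
      · rcases hab with h' | ⟨h', _⟩
        · exact absurd (h.trans h') (lt_irrefl _)
        · exact absurd (h' ▸ h) (lt_irrefl _)
      · rcases hab with h' | ⟨h', h3⟩
        · exact absurd (h ▸ h') (lt_irrefl _)
        · omega
  have hinj : Set.InjOn rank F := by
    intro a ha b hb hab
    by_contra hne
    rcases lt_trichotomy (c a) (c b) with h | h | h
    · exact absurd hab (Nat.ne_of_lt (hmono a ha b hb (Or.inl h)))
    · rcases lt_trichotomy a b with h2 | h2 | h2
      · exact absurd hab (Nat.ne_of_lt (hmono a ha b hb (Or.inr ⟨h, h2⟩)))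
      · exact hne h2
      · exact absurd hab.symm (Nat.ne_of_lt (hmono b hb a ha (Or.inr ⟨h.symm, h2⟩)))
    · exact absurd hab.symm (Nat.ne_of_lt (hmono b hb a ha (Or.inl h)))
  -- key counting bound : rank t ≤ 2 M (c t).toReal
  have hkey : ∀ t ∈ F, (rank t : ℝ) ≤ 2 * M * (c t).toReal := by
    intro t ht
    obtain ⟨-, -, htop⟩ := hFmem t ht
    have hct1 : (1:ℝ≥0∞) ≤ c t := hc t (hF1 t ht)
    have hx1 : (1:ℝ) ≤ (c t).toReal := by
      rw [← ENNReal.toReal_one]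
      exact ENNReal.toReal_mono htop hct1
    set x := (c t).toReal with hxdef
    set n₀ := ⌈x⌉₊ with hn₀
    have hn₀1 : 1 ≤ n₀ := Nat.one_le_ceil_iff.mpr (lt_of_lt_of_le one_pos hx1)
    have hctn₀ : c t ≤ (n₀ : ℝ≥0∞) := by
      have : c t = ENNReal.ofReal x := (ENNReal.ofReal_toReal htop).symm
      rw [this, ← ENNReal.ofReal_natCast]
      exact ENNReal.ofReal_le_ofReal (Nat.le_ceil x)
    have hb := hcard n₀ hn₀1 (F.filter (fun s => c s < c t ∨ (c s = c t ∧ s ≤ t))) ?_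
    · calc (rank t : ℝ) ≤ M * n₀ := hb
      _ ≤ M * (2 * x) := by
          apply mul_le_mul_of_nonneg_left _ hM0.le
          have : (n₀ : ℝ) < x + 1 := Nat.ceil_lt_add_one (by linarith)
          linarith
      _ = 2 * M * x := by ring
    · intro k hk
      simp only [Finset.mem_filter] at hk
      refine ⟨hF1 k hk.1, ?_⟩
      rcases hk.2 with h | ⟨h, -⟩
      · exact (h.le).trans hctn₀
      · exact h.le.trans hctn₀
  -- pointwise bound
  have hpoint : ∀ t ∈ F, (c t ^ (-δ)).toReal ≤ (2*M) ^ δ * (rank t : ℝ) ^ (-δ) := by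
    intro t ht
    obtain ⟨-, -, htop⟩ := hFmem t ht
    have hct1 : (1:ℝ≥0∞) ≤ c t := hc t (hF1 t ht)
    have hx1 : (1:ℝ) ≤ (c t).toReal := by
      rw [← ENNReal.toReal_one]
      exact ENNReal.toReal_mono htop hct1
    set x := (c t).toReal with hxdef
    have hx0 : (0:ℝ) < x := lt_of_lt_of_le one_pos hx1
    have hr1 : (1:ℝ) ≤ (rank t : ℝ) := by exact_mod_cast hrank1 t ht
    have hr0 : (0:ℝ) < (rank t : ℝ) := lt_of_lt_of_le one_pos hr1
    have hkey' := hkey t ht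
    have heq : (c t ^ (-δ)).toReal = x ^ (-δ) := (ENNReal.toReal_rpow _ _).symm
    rw [heq]
    have hrδ : ((rank t : ℝ)) ^ δ ≤ (2*M) ^ δ * x ^ δ := by
      calc ((rank t : ℝ)) ^ δ ≤ (2*M*x) ^ δ :=
        Real.rpow_le_rpow hr0.le hkey' hδ.le
      _ = (2*M) ^ δ * x ^ δ := Real.mul_rpow (by linarith) hx0.le
    rw [Real.rpow_neg hx0.le, Real.rpow_neg hr0.le]
    rw [inv_le_iff_one_le_mul₀ (Real.rpow_pos_of_pos hx0 δ)]
    have hxδ : (0:ℝ) < x ^ δ := Real.rpow_pos_of_pos hx0 δ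
    have hrδ0 : (0:ℝ) < (rank t : ℝ) ^ δ := Real.rpow_pos_of_pos hr0 δ
    calc (1:ℝ) = ((rank t:ℝ) ^ δ)⁻¹ * (rank t:ℝ) ^ δ := by field_simp
    _ ≤ ((rank t:ℝ) ^ δ)⁻¹ * ((2*M) ^ δ * x ^ δ) := by
        apply mul_le_mul_of_nonneg_left _ (by positivity)
        calc ((rank t : ℝ)) ^ δ ≤ (2*M*x) ^ δ :=
          Real.rpow_le_rpow hr0.le hkey' hδ.le
        _ = (2*M) ^ δ * x ^ δ := Real.mul_rpow (by linarith) hx0.le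
    _ = (2*M) ^ δ * ((rank t:ℝ) ^ δ)⁻¹ * x ^ δ := by ring
  -- assemble
  have hstep1 : ∑ t ∈ S, (c t ^ (-δ)).toReal = ∑ t ∈ F, (c t ^ (-δ)).toReal := by
    rw [hF]
    refine (Finset.sum_filter_of_ne ?_).symm
    intro t _ hne
    intro htop
    apply hne
    rw [htop, ENNReal.top_rpow_of_neg (by linarith)]
    simp
  rw [hstep1]
  calc ∑ t ∈ F, (c t ^ (-δ)).toReal
      ≤ ∑ t ∈ F, (2*M) ^ δ * (rank t : ℝ) ^ (-δ) := Finset.sum_le_sum hpoint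
    _ = (2*M) ^ δ * ∑ t ∈ F, (rank t : ℝ) ^ (-δ) := by rw [Finset.mul_sum]
    _ ≤ (2*M) ^ δ * ∑ j ∈ Finset.Icc 1 (n - m), (j : ℝ) ^ (-δ) := by
        apply mul_le_mul_of_nonneg_left _ (by positivity)
        rw [← Finset.sum_image (f := fun j : ℕ => (j:ℝ) ^ (-δ)) (g := rank)
          (fun a ha b hb h => hinj ha hb h)]
        apply Finset.sum_le_sum_of_subset_of_nonneg
        · intro j hj
          simp only [Finset.mem_image] at hj
          obtain ⟨t, ht, rfl⟩ := hj
          exact Finset.mem_Icc.mpr ⟨hrank1 t ht, hrankcard t ht⟩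
        · intro j _ _
          positivity
    _ = (2:ℝ) ^ δ * M ^ δ * ∑ j ∈ Finset.Icc 1 (n - m), (j : ℝ) ^ (-δ) := by
        rw [Real.mul_rpow (by norm_num) hM0.le]
end

section
/- Let V be a finite-dimensional complex normed vector space and let h be an invertible linear map on V all of whose eigenvalues have modulus 1. If the set {‖h^n‖ : n ∈ ℤ} of operator norms is unbounded, then there exists c > 0 such that ‖h^n‖ ≥ c n for every n ∈ ℕ. -/
/-!
If `ker (h - μ)² = ker (h - μ)` for every `μ`, the generalized eigenspaces are eigenspaces, so
eigenvectors span `V`; on each of them `h ^ n` acts by a scalar of modulus one, and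
Banach–Steinhaus bounds `‖h ^ n‖` uniformly in `n : ℤ`. Otherwise there is a Jordan chain
`h v = μ v`, `h w = μ w + v` with `v ≠ 0`; then `μ h ^ n w = μ ^ (n + 1) w + n μ ^ n v` gives
`n ‖v‖ ≤ ‖h ^ n‖ ‖w‖ + ‖w‖`, and the eigenvector `v` gives `‖h ^ n‖ ≥ 1`, so
`n ‖v‖ ≤ 2 ‖w‖ ‖h ^ n‖`.
-/

open Module End Set

namespace Module.End

variable {R M : Type*} [CommRing R] [AddCommGroup M] [Module R M]

theorem iSup_eigenspace_eq_top_of_ker_sq_le {K V : Type*} [Field K] [IsAlgClosed K]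
    [AddCommGroup V] [Module K V] [FiniteDimensional K V] (f : End K V)
    (hf : ∀ μ : K, LinearMap.ker ((f - μ • 1) ^ 2) ≤ LinearMap.ker (f - μ • 1)) :
    ⨆ μ, f.eigenspace μ = ⊤ := by
  refine eq_top_iff.2 <| (iSup_maxGenEigenspace_eq_top f).ge.trans <| iSup_mono fun μ => ?_
  rw [← iSup_genEigenspace_eq]
  refine iSup_le fun k => ?_
  rw [genEigenspace_nat, eigenspace_def]
  rcases k with _ | k
  · rw [pow_zero, one_eq_id, LinearMap.ker_id]
    exact bot_le
  · have hsq : LinearMap.ker ((f - μ • 1) ^ 1) = LinearMap.ker ((f - μ • 1) ^ 2) :=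
      le_antisymm (LinearMap.ker_le_ker_comp _ _) ((hf μ).trans_eq (by rw [pow_one]))
    rw [add_comm, ← ker_pow_constant hsq k, pow_one]

theorem exists_jordan_chain_of_not_ker_sq_le {f : End R M} {μ : R}
    (hf : ¬ LinearMap.ker ((f - μ • 1) ^ 2) ≤ LinearMap.ker (f - μ • 1)) :
    ∃ v w : M, v ≠ 0 ∧ f v = μ • v ∧ f w = μ • w + v := by
  obtain ⟨w, hw2, hw1⟩ := SetLike.not_le_iff_exists.1 hf
  refine ⟨(f - μ • 1) w, w, hw1, ?_, ?_⟩
  · rw [LinearMap.mem_ker, sq, mul_apply, LinearMap.sub_apply, sub_eq_zero] at hw2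
    simpa using hw2
  · simp

theorem smul_pow_apply_of_jordan_chain {f : End R M} {μ : R} {v w : M}
    (hv : f v = μ • v) (hw : f w = μ • w + v) (n : ℕ) :
    μ • (f ^ n) w = μ ^ (n + 1) • w + (n * μ ^ n) • v := by
  induction n with
  | zero => simp
  | succ n ih =>
    rw [pow_succ', mul_apply, ← map_smul, ih, map_add, map_smul, map_smul, hw, hv]
    push_cast
    module

end Module.End

namespace ContinuousLinearMap

section

variable {𝕜 E : Type*} [NontriviallyNormedField 𝕜] [NormedAddCommGroup E] [NormedSpace 𝕜 E]

theorem exists_norm_le_of_iSup_eq_top [CompleteSpace E] {ι κ F : Type*} [NormedAddCommGroup F]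
    [NormedSpace 𝕜 F] (T : ι → E →L[𝕜] F) {p : κ → Submodule 𝕜 E} (hp : ⨆ k, p k = ⊤)
    (hT : ∀ k, ∀ x ∈ p k, ∃ C, ∀ i, ‖T i x‖ ≤ C) : ∃ C, ∀ i, ‖T i‖ ≤ C := by
  refine banach_steinhaus fun x => ?_
  induction (hp ▸ Submodule.mem_top : x ∈ ⨆ k, p k) using Submodule.iSup_induction' with
  | mem k x hx => exact hT k x hx
  | zero => exact ⟨0, fun i => by simp⟩
  | add x y _ _ hx hy =>
    obtain ⟨C₁, hC₁⟩ := hx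
    obtain ⟨C₂, hC₂⟩ := hy
    exact ⟨C₁ + C₂, fun i =>
      (map_add (T i) x y ▸ norm_add_le _ _).trans (add_le_add (hC₁ i) (hC₂ i))⟩

theorem units_zpow_apply_of_apply_eq_smul (u : (E →L[𝕜] E)ˣ) {μ : 𝕜} {x : E} (hμ : μ ≠ 0)
    (hx : (u : E →L[𝕜] E) x = μ • x) (n : ℤ) :
    ((u ^ n : (E →L[𝕜] E)ˣ) : E →L[𝕜] E) x = μ ^ n • x := by
  have hinv : ((u⁻¹ : (E →L[𝕜] E)ˣ) : E →L[𝕜] E) x = μ⁻¹ • x := by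
    conv_lhs => rw [← inv_smul_smul₀ hμ x, ← hx, map_smul, ← mul_apply_eq_comp, Units.inv_mul,
      one_apply_eq_self]
  induction n using Int.induction_on with
  | zero => simp
  | succ n ih =>
    rw [zpow_add_one, Units.val_mul, mul_apply_eq_comp, hx, map_smul, ih, smul_smul,
      zpow_add_one₀ hμ, mul_comm]
  | pred n ih =>
    rw [zpow_sub_one, Units.val_mul, mul_apply_eq_comp, hinv, map_smul, ih, smul_smul,
      zpow_sub_one₀ hμ, mul_comm]

theorem bddAbove_range_norm_units_zpow [CompleteSpace E] (u : (E →L[𝕜] E)ˣ)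
    (heig : ∀ μ : 𝕜, HasEigenvalue ((u : E →L[𝕜] E) : E →ₗ[𝕜] E) μ → ‖μ‖ = 1)
    (hspan : ⨆ μ, eigenspace ((u : E →L[𝕜] E) : E →ₗ[𝕜] E) μ = ⊤) :
    BddAbove (range fun n : ℤ => ‖((u ^ n : (E →L[𝕜] E)ˣ) : E →L[𝕜] E)‖) := by
  obtain ⟨C, hC⟩ := exists_norm_le_of_iSup_eq_top
      (fun n : ℤ => ((u ^ n : (E →L[𝕜] E)ˣ) : E →L[𝕜] E)) hspan fun μ x hx => by
    rcases eq_or_ne x 0 with rfl | hx0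
    · exact ⟨0, fun n => by rw [map_zero, norm_zero]⟩
    have hμ : ‖μ‖ = 1 := heig μ (hasEigenvalue_of_hasEigenvector ⟨hx, hx0⟩)
    refine ⟨‖x‖, fun n => ?_⟩
    rw [units_zpow_apply_of_apply_eq_smul u (norm_ne_zero_iff.1 (hμ ▸ one_ne_zero))
      (mem_eigenspace_iff.1 hx), norm_smul, norm_zpow, hμ, one_zpow, one_mul]
  exact ⟨C, forall_mem_range.2 hC⟩

end

variable {𝕜 E : Type*} [RCLike 𝕜] [NormedAddCommGroup E] [NormedSpace 𝕜 E]

theorem exists_pos_mul_le_norm_pow_of_jordan_chain (T : E →L[𝕜] E) {μ : 𝕜} {v w : E}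
    (hμ : ‖μ‖ = 1) (hv0 : v ≠ 0) (hv : T v = μ • v) (hw : T w = μ • w + v) :
    ∃ c : ℝ, 0 < c ∧ ∀ n : ℕ, c * n ≤ ‖T ^ n‖ := by
  have hw0 : w ≠ 0 := by
    rintro rfl
    rw [map_zero, smul_zero, zero_add] at hw
    exact hv0 hw.symm
  have hone (n : ℕ) : 1 ≤ ‖T ^ n‖ := by
    have hTv : (T ^ n) v = μ ^ n • v := by
      rw [← coe_coe, toLinearMap_pow]
      exact HasEigenvector.pow_apply (f := (T : E →ₗ[𝕜] E)) ⟨mem_eigenspace_iff.2 hv, hv0⟩ n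
    have hle := (T ^ n).le_opNorm v
    rw [hTv, norm_smul, norm_pow, hμ, one_pow, one_mul] at hle
    exact le_of_mul_le_mul_right (by rwa [one_mul]) (norm_pos_iff.2 hv0)
  have hgrowth (n : ℕ) : n * ‖v‖ ≤ ‖T ^ n‖ * ‖w‖ + ‖w‖ := by
    have hpow : μ • (T ^ n) w = μ ^ (n + 1) • w + (n * μ ^ n) • v := by
      rw [← coe_coe, toLinearMap_pow]
      exact smul_pow_apply_of_jordan_chain (f := (T : E →ₗ[𝕜] E)) hv hw n
    calc n * ‖v‖ = ‖((n : 𝕜) * μ ^ n) • v‖ := by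
          rw [norm_smul, norm_mul, norm_pow, hμ, one_pow, mul_one, RCLike.norm_natCast]
      _ = ‖μ • (T ^ n) w - μ ^ (n + 1) • w‖ := by rw [hpow, add_sub_cancel_left]
      _ ≤ ‖μ • (T ^ n) w‖ + ‖μ ^ (n + 1) • w‖ := norm_sub_le _ _
      _ = ‖(T ^ n) w‖ + ‖w‖ := by rw [norm_smul, norm_smul, norm_pow, hμ, one_pow, one_mul, one_mul]
      _ ≤ ‖T ^ n‖ * ‖w‖ + ‖w‖ := by gcongr; exact (T ^ n).le_opNorm w
  refine ⟨‖v‖ / (2 * ‖w‖), by positivity, fun n => ?_⟩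
  rw [div_mul_eq_mul_div, div_le_iff₀ (by positivity)]
  nlinarith [hone n, hgrowth n, norm_nonneg w]

end ContinuousLinearMap

theorem quasiUnipotent_unbounded_linear_growth
    {V : Type*} [NormedAddCommGroup V] [NormedSpace ℂ V] [FiniteDimensional ℂ V]
    (h : (V →L[ℂ] V)ˣ)
    (heig : ∀ μ : ℂ,
      Module.End.HasEigenvalue ((h : V →L[ℂ] V) : V →ₗ[ℂ] V) μ → ‖μ‖ = 1)
    (hub : ¬ BddAbove
      (Set.range fun n : ℤ => ‖((h ^ n : (V →L[ℂ] V)ˣ) : V →L[ℂ] V)‖)) :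
    ∃ c : ℝ, 0 < c ∧ ∀ n : ℕ, 1 ≤ n →
      c * n ≤ ‖((h ^ (n : ℤ) : (V →L[ℂ] V)ˣ) : V →L[ℂ] V)‖ := by
  set e : End ℂ V := ((h : V →L[ℂ] V) : V →ₗ[ℂ] V)
  by_cases! hss : ∀ μ : ℂ, LinearMap.ker ((e - μ • 1) ^ 2) ≤ LinearMap.ker (e - μ • 1)
  · exact absurd (ContinuousLinearMap.bddAbove_range_norm_units_zpow h heig
      (iSup_eigenspace_eq_top_of_ker_sq_le e hss)) hub
  obtain ⟨μ, hμ⟩ := hss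
  obtain ⟨v, w, hv0, hv, hw⟩ := exists_jordan_chain_of_not_ker_sq_le hμ
  obtain ⟨c, hc, hgrowth⟩ := ContinuousLinearMap.exists_pos_mul_le_norm_pow_of_jordan_chain
    (h : V →L[ℂ] V) (heig μ (hasEigenvalue_of_hasEigenvector ⟨mem_eigenspace_iff.2 hv, hv0⟩))
    hv0 hv hw
  exact ⟨c, hc, fun n _ => by rw [zpow_natCast, Units.val_pow_eq_pow_val]; exact hgrowth n⟩
end

section
/- Let V be a finite-dimensional complex normed vector space and let g, h be commuting unipotent linear automorphisms of V (i.e., g − id and h − id are nilpotent) with g ≠ id. Then there exists M ≥ 1 such that for all m ∈ ℕ and all N ∈ ℕ, |{n ∈ ℕ : ‖h^m g^n‖ ≤ N}| ≤ M N, where ‖·‖ denotes the operator norm. -/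
/-!
Write `g = 1 + u` with `u` nilpotent and nonzero, and pick `l` with `u ^ (l + 1) ≠ 0 = u ^ (l + 2)`.
Then `u ^ l * g ^ n = u ^ l + n • u ^ (l + 1)`, so `u ^ l` turns `g ^ n` into an affine function of
`n`. Since `h` is unipotent and commutes with `u`, it fixes a nonzero vector `y = u ^ (l + 1) v`.
Testing `u ^ l * h ^ m * g ^ n` on `v` against a norming functional of `y` gives
`|a_m + n ‖y‖| ≤ C ‖h ^ m * g ^ n‖`, so the `n` with `‖h ^ m * g ^ n‖ ≤ N` lie in an interval of
length `O(N)`, uniformly in `m`.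
-/

open Finset

lemma IsNilpotent.exists_pow_succ_ne_zero_pow_add_two_eq_zero {R : Type*} [MonoidWithZero R]
    {x : R} (hx : IsNilpotent x) (hx0 : x ≠ 0) : ∃ l, x ^ (l + 1) ≠ 0 ∧ x ^ (l + 2) = 0 := by
  have : Nontrivial R := nontrivial_of_ne x 0 hx0
  have hpos := pos_nilpotencyClass_iff.mpr hx
  have hne_one := nilpotencyClass_eq_one.not.mpr hx0
  obtain ⟨l, hl⟩ : ∃ l, nilpotencyClass x = l + 1 + 1 := ⟨nilpotencyClass x - 2, by omega⟩
  exact ⟨l, (nilpotencyClass_eq_succ_iff.mp hl).symm⟩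

lemma mul_pow_eq_add_nsmul {A : Type*} [Ring A] {g P Q : A} (hP : P * (g - 1) = Q)
    (hQ : Q * (g - 1) = 0) (n : ℕ) : P * g ^ n = P + n • Q := by
  induction n with
  | zero => simp
  | succ n ih =>
    have hQg : Q * g = Q := by rwa [mul_sub, mul_one, sub_eq_zero] at hQ
    have hPg : P * g = P + Q := by rw [← hP, mul_sub, mul_one, add_sub_cancel]
    rw [pow_succ, ← mul_assoc, ih, add_mul, smul_mul_assoc, hPg, hQg, succ_nsmul]
    abel

lemma ContinuousLinearMap.exists_pow_apply_ne_zero_apply_pow_apply_eq_zero {R M : Type*}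
    [Semiring R] [TopologicalSpace M] [AddCommMonoid M] [Module R M] {w : M →L[R] M}
    (hw : IsNilpotent w) {z : M} (hz : z ≠ 0) : ∃ i, (w ^ i) z ≠ 0 ∧ w ((w ^ i) z) = 0 := by
  classical
  obtain ⟨k, hk⟩ := hw
  have hex : ∃ j, (w ^ j) z = 0 := ⟨k, by simp [hk]⟩
  have hfind_ne_zero : Nat.find hex ≠ 0 := fun h0 => by
    simpa only [h0, pow_zero, one_apply_eq_self, hz] using Nat.find_spec hex
  refine ⟨Nat.find hex - 1, Nat.find_min hex (by omega), ?_⟩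
  rw [← mul_apply_eq_comp, ← pow_succ', Nat.sub_add_cancel (by omega)]
  exact Nat.find_spec hex

lemma ContinuousLinearMap.exists_apply_ne_zero_apply_eq_self {R M : Type*} [Ring R]
    [TopologicalSpace M] [AddCommGroup M] [IsTopologicalAddGroup M] [Module R M]
    {Q h : M →L[R] M} (hQ : Q ≠ 0) (hh : IsNilpotent (h - 1)) (hQh : Commute Q h) :
    ∃ v, Q v ≠ 0 ∧ h (Q v) = Q v := by
  obtain ⟨v₀, hv₀⟩ : ∃ v₀, Q v₀ ≠ 0 := by
    by_contra! h0
    exact hQ (ContinuousLinearMap.ext h0)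
  obtain ⟨i, hi, hfix⟩ := exists_pow_apply_ne_zero_apply_pow_apply_eq_zero hh hv₀
  have hcomm : Q * (h - 1) ^ i = (h - 1) ^ i * Q := ((hQh.sub_right (.one_right Q)).pow_right i).eq
  have hQw : Q (((h - 1) ^ i) v₀) = ((h - 1) ^ i) (Q v₀) := congr($hcomm v₀)
  refine ⟨((h - 1) ^ i) v₀, hQw ▸ hi, ?_⟩
  rw [hQw, ← sub_eq_zero]
  exact hfix

lemma Finset.card_le_of_forall_sub_le {s : Finset ℕ} {D : ℝ} (hD : 0 ≤ D)
    (hs : ∀ a ∈ s, ∀ b ∈ s, (b : ℝ) - a ≤ D) : (s.card : ℝ) ≤ D + 1 := by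
  rcases s.eq_empty_or_nonempty with rfl | hne
  · simpa using hD.trans (le_add_of_nonneg_right zero_le_one)
  have hsub : s ⊆ Icc (s.min' hne) (s.max' hne) := fun x hx =>
    mem_Icc.mpr ⟨s.min'_le x hx, s.le_max' x hx⟩
  have hle : s.min' hne ≤ s.max' hne := s.min'_le _ (s.max'_mem hne)
  calc (s.card : ℝ) ≤ ((s.max' hne + 1 - s.min' hne : ℕ) : ℝ) := by
        rw [← Nat.card_Icc]; exact_mod_cast card_le_card hsub
    _ = (s.max' hne : ℝ) - s.min' hne + 1 := by
        push_cast [Nat.sub_add_comm hle, Nat.cast_sub hle]; ring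
    _ ≤ D + 1 := by gcongr; exact hs _ (s.min'_mem hne) _ (s.max'_mem hne)

lemma Finset.card_le_of_forall_abs_add_mul_le {s : Finset ℕ} {a c B : ℝ} (hc : 0 < c)
    (hB : 0 ≤ B) (hs : ∀ n ∈ s, |a + n * c| ≤ B) : (s.card : ℝ) ≤ 2 * B / c + 1 := by
  refine card_le_of_forall_sub_le (by positivity) fun p hp q hq => ?_
  rw [le_div_iff₀ hc]
  have hp' := (abs_le.mp (hs p hp)).1
  have hq' := (abs_le.mp (hs q hq)).2
  nlinarith

lemma ContinuousLinearMap.exists_abs_add_mul_le_opNorm {𝕜 E : Type*} [RCLike 𝕜]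
    [NormedAddCommGroup E] [NormedSpace 𝕜 E] {g h P Q : E →L[𝕜] E} {v : E}
    (hPg : ∀ n : ℕ, P * g ^ n = P + n • Q) (hPh : Commute P h) (hQv : Q v ≠ 0)
    (hhQv : h (Q v) = Q v) :
    ∃ c > 0, ∀ m : ℕ, ∃ a : ℝ, ∀ n : ℕ, |a + n * c| ≤ ‖P‖ * ‖v‖ * ‖h ^ m * g ^ n‖ := by
  obtain ⟨φ, hφ, hφQv⟩ := exists_dual_vector 𝕜 (Q v) (norm_ne_zero_iff.mpr hQv)
  refine ⟨‖Q v‖, norm_pos_iff.mpr hQv, fun m => ⟨RCLike.re (φ ((h ^ m) (P v))), fun n => ?_⟩⟩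
  have hhmQv : (h ^ m) (Q v) = Q v := by
    rw [FunLike.coe_pow_eq_iterate]
    exact Function.IsFixedPt.iterate hhQv m
  have hPhg : P * (h ^ m * g ^ n) = h ^ m * P + n • (h ^ m * Q) := by
    rw [← mul_assoc, (hPh.pow_right m).eq, mul_assoc, hPg, mul_add, mul_smul_comm]
  have hre : RCLike.re (φ ((P * (h ^ m * g ^ n)) v))
      = RCLike.re (φ ((h ^ m) (P v))) + n * ‖Q v‖ := by
    simp [hPhg, hhmQv, hφQv]
  calc |RCLike.re (φ ((h ^ m) (P v))) + n * ‖Q v‖|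
      = |RCLike.re (φ ((P * (h ^ m * g ^ n)) v))| := by rw [hre]
    _ ≤ ‖φ ((P * (h ^ m * g ^ n)) v)‖ := RCLike.abs_re_le_norm _
    _ ≤ ‖φ‖ * (‖P‖ * (‖h ^ m * g ^ n‖ * ‖v‖)) := by
        refine (φ.le_opNorm _).trans (mul_le_mul_of_nonneg_left ?_ (norm_nonneg φ))
        exact (P.le_opNorm _).trans (mul_le_mul_of_nonneg_left ((h ^ m * g ^ n).le_opNorm v)
          (norm_nonneg P))
    _ = ‖P‖ * ‖v‖ * ‖h ^ m * g ^ n‖ := by rw [hφ]; ring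

theorem commuting_unipotent_counting_general
    {V : Type*} [NormedAddCommGroup V] [NormedSpace ℂ V]
    (g h : V →L[ℂ] V)
    (hgu : IsNilpotent (g - 1)) (hhu : IsNilpotent (h - 1))
    (hcomm : Commute g h) (hg : g ≠ 1) :
    ∃ M : ℝ, 1 ≤ M ∧ ∀ m N : ℕ, 1 ≤ m → 1 ≤ N →
      ∀ s : Finset ℕ, (∀ n ∈ s, 1 ≤ n ∧ ‖h ^ m * g ^ n‖ ≤ (N : ℝ)) →
        (s.card : ℝ) ≤ M * N := by
  obtain ⟨l, hl, hl2⟩ := hgu.exists_pow_succ_ne_zero_pow_add_two_eq_zero (sub_ne_zero.mpr hg)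
  have huh : Commute (g - 1) h := hcomm.sub_left (.one_left h)
  have hPg : ∀ n : ℕ, (g - 1) ^ l * g ^ n = (g - 1) ^ l + n • (g - 1) ^ (l + 1) :=
    mul_pow_eq_add_nsmul (pow_succ _ _).symm (by rw [← pow_succ]; exact hl2)
  obtain ⟨v, hv, hhv⟩ :=
    ContinuousLinearMap.exists_apply_ne_zero_apply_eq_self hl hhu (huh.pow_left (l + 1))
  obtain ⟨c, hc, hbound⟩ :=
    ContinuousLinearMap.exists_abs_add_mul_le_opNorm hPg (huh.pow_left l) hv hhv
  set C := ‖(g - 1) ^ l‖ * ‖v‖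
  refine ⟨2 * C / c + 1, by simp only [le_add_iff_nonneg_left]; positivity, ?_⟩
  intro m N _ hN s hs
  obtain ⟨a, ha⟩ := hbound m
  have hcard := card_le_of_forall_abs_add_mul_le hc (by positivity : 0 ≤ C * N) fun n hn =>
    (ha n).trans (mul_le_mul_of_nonneg_left (hs n hn).2 (by positivity))
  have hN1 : (1 : ℝ) ≤ N := by exact_mod_cast hN
  calc (s.card : ℝ) ≤ 2 * C / c * N + 1 := hcard.trans_eq (by ring)
    _ ≤ (2 * C / c + 1) * N := by nlinarith [show 0 ≤ 2 * C / c by positivity]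

theorem commuting_unipotent_counting
    {V : Type*} [NormedAddCommGroup V] [NormedSpace ℂ V] [FiniteDimensional ℂ V]
    (g h : V →L[ℂ] V)
    (hgu : IsNilpotent (g - 1)) (hhu : IsNilpotent (h - 1))
    (hcomm : Commute g h) (hg : g ≠ 1) :
    ∃ M : ℝ, 1 ≤ M ∧ ∀ m N : ℕ, 1 ≤ m → 1 ≤ N →
      ∀ s : Finset ℕ, (∀ n ∈ s, 1 ≤ n ∧ ‖h ^ m * g ^ n‖ ≤ (N : ℝ)) →
        (s.card : ℝ) ≤ M * N :=
  commuting_unipotent_counting_general g h hgu hhu hcomm hg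
end

section
/- Let X, Y be measurable spaces, ℓ a positive integer, and for 1 ≤ i ≤ ℓ and n ∈ ℕ let ξ_i : Y → X, h_{i,n} : X → X and f_i : X → ℝ be measurable maps; set F_n(y) = Π_{i=1}^ℓ f_i(h_{i,n} ξ_i(y)) and let ν be a probability measure on Y such that every F_n is square integrable. Assume there exist M ≥ 1, δ > 1, functions b_{i,j} : ℕ × ℕ → [1, ∞] and c_{i,j} : ℕ → [1, ∞] (convention ∞^{−δ} = 0) such that: |∫_Y F_m F_n dν| ≤ M Σ_{i,j=1}^ℓ (b_{i,j}(m,n)^{−δ} + c_{i,j}(m)^{−δ} + c_{i,j}(n)^{−δ}) for all m, n ∈ ℕ; |{k ∈ ℕ : c_{i,j}(k) ≤ n}| ≤ M n for all i, j, n; and |{k ∈ ℕ : b_{i,j}(m,k) ≤ n}| ≤ M n for all i, j, m, n. Then for all nonnegative integers m < n, ∫_Y (Σ_{m < k ≤ n} F_k(y))² dν(y) ≤ 4^{1+δ} M^{1+δ} (δ − 1)^{−1} ℓ² (n − m). -/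
/-!
Expanding the square and applying the correlation bound reduces everything to sums
`∑_{k ∈ s} g(k)^{-δ}` over the window `s = (m, n]`. The counting hypothesis forces the `r`-th
smallest value of `g` on `s` to be at least `r / (2M)`, so such a sum is at most
`(2M)^δ ∑_{r ≥ 1} r^{-δ} ≤ (2M)^δ δ / (δ - 1)`, the last step by comparison with `∫_1^∞ x^{-δ}`.
Each of the `3ℓ²` families of terms in the double sum over `s × s` therefore contributes at
most `|s|` times this bound, and `3δ ≤ 4 · 2^δ` absorbs the constants.
-/

open MeasureTheory Finset
open scoped ENNReal

lemma sum_range_add_one_rpow_neg_le {δ : ℝ} (hδ : 1 < δ) (N : ℕ) :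
    ∑ i ∈ range N, ((i : ℝ) + 1) ^ (-δ) ≤ δ / (δ - 1) := by
  have hδ1 : 0 < δ - 1 := by linarith
  cases N with
  | zero => simp only [range_zero, sum_empty]; positivity
  | succ N =>
    have hanti : AntitoneOn (fun x : ℝ ↦ x ^ (-δ)) (Set.Icc 1 (1 + N)) :=
      fun x hx y _ hxy ↦ Real.rpow_le_rpow_of_nonpos (by linarith [hx.1]) hxy (by linarith)
    have htail := hanti.sum_le_integral
    have hzero : (0 : ℝ) ∉ Set.uIcc 1 (1 + (N : ℝ)) := by
      rw [Set.uIcc_of_le (by simp)]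
      exact fun h0 ↦ by linarith [h0.1]
    rw [integral_rpow (Or.inr ⟨by linarith, hzero⟩), Real.one_rpow,
      show -δ + 1 = -(δ - 1) by ring] at htail
    have hintegral : ((1 + N : ℝ) ^ (-(δ - 1)) - 1) / -(δ - 1) ≤ 1 / (δ - 1) := by
      rw [div_neg, ← neg_div, neg_sub]
      gcongr
      linarith [Real.rpow_nonneg (by positivity : (0 : ℝ) ≤ 1 + N) (-(δ - 1))]
    rw [sum_range_succ']
    calc ∑ i ∈ range N, (((i + 1 : ℕ) : ℝ) + 1) ^ (-δ) + ((0 : ℕ) + 1 : ℝ) ^ (-δ)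
        = ∑ i ∈ range N, (1 + ((i + 1 : ℕ) : ℝ)) ^ (-δ) + 1 := by simp [add_comm]
      _ ≤ 1 / (δ - 1) + 1 := by linarith
      _ = δ / (δ - 1) := by field_simp; ring

lemma toReal_rpow_neg_le_of_card_le {α : Type*} {M δ : ℝ} (hM : 0 ≤ M) (hδ : 0 < δ)
    {t : Finset α} {g : α → ℝ≥0∞} {a : α} (hat : a ∈ t) (ha : 1 ≤ g a)
    (hmax : ∀ k ∈ t, g k ≤ g a)
    (hcard : ∀ n : ℕ, 1 ≤ n → (∀ k ∈ t, g k ≤ n) → (#t : ℝ) ≤ M * n) :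
    (g a ^ (-δ)).toReal ≤ (2 * M) ^ δ * (#t : ℝ) ^ (-δ) := by
  rcases eq_or_ne (g a) ⊤ with htop | htop
  · rw [htop, ENNReal.top_rpow_of_neg (neg_neg_of_pos hδ), ENNReal.toReal_zero]
    positivity
  set x := (g a).toReal
  have hx : 1 ≤ x := by simpa using ENNReal.toReal_mono htop ha
  have hga : g a ≤ (⌈x⌉₊ : ℝ≥0∞) := by
    rw [← ENNReal.ofReal_natCast, ENNReal.le_ofReal_iff_toReal_le htop (by positivity)]
    exact Nat.le_ceil x
  have hcount : (#t : ℝ) ≤ 2 * M * x :=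
    calc (#t : ℝ) ≤ M * ⌈x⌉₊ :=
          hcard _ (Nat.one_le_ceil_iff.2 (by linarith)) fun k hk ↦ (hmax k hk).trans hga
      _ ≤ M * (2 * x) := by
          gcongr
          linarith [Nat.ceil_lt_add_one (by linarith : 0 ≤ x)]
      _ = 2 * M * x := by ring
  have hcard_pos : (0 : ℝ) < #t := by exact_mod_cast card_pos.2 ⟨a, hat⟩
  rw [← ENNReal.toReal_rpow, Real.rpow_neg (by positivity), Real.rpow_neg hcard_pos.le,
    ← div_eq_mul_inv, le_div_iff₀ (by positivity), inv_mul_le_iff₀ (by positivity),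
    ← Real.mul_rpow (by positivity) (by positivity)]
  exact Real.rpow_le_rpow hcard_pos.le (hcount.trans_eq (by ring)) hδ.le

lemma sum_toReal_rpow_neg_le_sum_range {α : Type*} [DecidableEq α] {M δ : ℝ} (hM : 0 ≤ M)
    (hδ : 0 < δ) {s : Finset α} {g : α → ℝ≥0∞} (hg : ∀ k ∈ s, 1 ≤ g k)
    (hcard : ∀ n : ℕ, 1 ≤ n → ∀ t ⊆ s, (∀ k ∈ t, g k ≤ n) → (#t : ℝ) ≤ M * n) :
    ∑ k ∈ s, (g k ^ (-δ)).toReal ≤ (2 * M) ^ δ * ∑ i ∈ range #s, ((i : ℝ) + 1) ^ (-δ) := by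
  suffices ∀ t ⊆ s, ∑ k ∈ t, (g k ^ (-δ)).toReal ≤
      (2 * M) ^ δ * ∑ i ∈ range #t, ((i : ℝ) + 1) ^ (-δ) from this s subset_rfl
  intro t
  induction t using Finset.induction_on_max_value g with
  | empty => simp
  | insert a t hat hmax ih =>
    intro hts
    have hlast := toReal_rpow_neg_le_of_card_le hM hδ (mem_insert_self a t)
      (hg a (hts (mem_insert_self a t)))
      (fun k hk ↦ (mem_insert.1 hk).elim (fun h ↦ h ▸ le_rfl) (hmax k))
      fun n hn hle ↦ hcard n hn _ hts hle
    rw [card_insert_of_notMem hat, Nat.cast_succ] at hlast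
    rw [sum_insert hat, card_insert_of_notMem hat, sum_range_succ, mul_add, add_comm]
    exact add_le_add (ih ((subset_insert a t).trans hts)) hlast

lemma sum_toReal_rpow_neg_le {α : Type*} [DecidableEq α] {M δ : ℝ} (hM : 0 ≤ M)
    (hδ : 1 < δ) {s : Finset α} {g : α → ℝ≥0∞} (hg : ∀ k ∈ s, 1 ≤ g k)
    (hcard : ∀ n : ℕ, 1 ≤ n → ∀ t ⊆ s, (∀ k ∈ t, g k ≤ n) → (#t : ℝ) ≤ M * n) :
    ∑ k ∈ s, (g k ^ (-δ)).toReal ≤ (2 * M) ^ δ * (δ / (δ - 1)) :=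
  (sum_toReal_rpow_neg_le_sum_range hM (by linarith) hg hcard).trans <|
    mul_le_mul_of_nonneg_left (sum_range_add_one_rpow_neg_le hδ _) (by positivity)

lemma integral_sq_sum_eq_sum_sum {Ω α : Type*} [MeasurableSpace Ω] {μ : Measure Ω}
    {s : Finset α} {F : α → Ω → ℝ} (hF : ∀ k ∈ s, MemLp (F k) 2 μ) :
    ∫ y, (∑ k ∈ s, F k y) ^ 2 ∂μ = ∑ k ∈ s, ∑ k' ∈ s, ∫ y, F k y * F k' y ∂μ := by
  have hint : ∀ k ∈ s, ∀ k' ∈ s, Integrable (fun y ↦ F k y * F k' y) μ :=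
    fun k hk k' hk' ↦ (hF k hk).integrable_mul (hF k' hk')
  simp_rw [sq, sum_mul_sum]
  rw [integral_finsetSum _ fun k hk ↦ integrable_finsetSum _ (hint k hk)]
  exact sum_congr rfl fun k hk ↦ integral_finsetSum _ (hint k hk)

lemma sum_sum_sum_add_add_le {ι α : Type*} [Fintype ι] (s : Finset α) (B : ι → α → α → ℝ)
    (C : ι → α → ℝ) {K : ℝ} (hB : ∀ i, ∀ k ∈ s, ∑ k' ∈ s, B i k k' ≤ K)
    (hC : ∀ i, ∑ k ∈ s, C i k ≤ K) :
    ∑ k ∈ s, ∑ k' ∈ s, ∑ i, (B i k k' + C i k + C i k') ≤ Fintype.card ι * (3 * #s * K) := by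
  have hi : ∀ i, ∑ k ∈ s, ∑ k' ∈ s, (B i k k' + C i k + C i k') ≤ 3 * #s * K := fun i ↦
    calc ∑ k ∈ s, ∑ k' ∈ s, (B i k k' + C i k + C i k')
        = ∑ k ∈ s, ∑ k' ∈ s, B i k k' + #s * ∑ k ∈ s, C i k + #s * ∑ k' ∈ s, C i k' := by
          simp only [sum_add_distrib, sum_const, nsmul_eq_mul, mul_sum]
      _ ≤ ∑ _k ∈ s, K + #s * K + #s * K := by
          gcongr with k hk
          exacts [hB i k hk, hC i, hC i]
      _ = 3 * #s * K := by rw [sum_const, nsmul_eq_mul]; ring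
  calc ∑ k ∈ s, ∑ k' ∈ s, ∑ i, (B i k k' + C i k + C i k')
      = ∑ i, ∑ k ∈ s, ∑ k' ∈ s, (B i k k' + C i k + C i k') :=
        (sum_congr rfl fun _ _ ↦ sum_comm).trans sum_comm
    _ ≤ ∑ _i : ι, 3 * #s * K := sum_le_sum fun i _ ↦ hi i
    _ = Fintype.card ι * (3 * #s * K) := by rw [sum_const, nsmul_eq_mul, card_univ]

lemma three_mul_mul_two_mul_rpow_le {M δ : ℝ} (hM : 0 ≤ M) (hδ : 1 < δ) :
    3 * M * ((2 * M) ^ δ * (δ / (δ - 1))) ≤ 4 ^ (1 + δ) * M ^ (1 + δ) * (δ - 1)⁻¹ := by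
  have hbernoulli : 1 + δ ≤ (2 : ℝ) ^ δ := by
    simpa [one_add_one_eq_two] using
      one_add_mul_self_le_rpow_one_add (by norm_num : (-1 : ℝ) ≤ 1) hδ.le
  have h4 : (4 : ℝ) ^ (1 + δ) = 4 * ((2 : ℝ) ^ δ * 2 ^ δ) := by
    rw [Real.rpow_add (by norm_num), Real.rpow_one, ← Real.mul_rpow (by norm_num) (by norm_num)]
    norm_num
  rw [h4, Real.rpow_add' hM (by linarith), Real.rpow_one, Real.mul_rpow (by norm_num) hM,
    div_eq_mul_inv]
  have : 0 ≤ M * M ^ δ * (2 : ℝ) ^ δ * (δ - 1)⁻¹ := by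
    have : 0 < δ - 1 := by linarith
    positivity
  nlinarith

theorem second_moment_bound_delta_gt_one_general
    {Y : Type*} [MeasurableSpace Y]
    (ν : Measure Y)
    (ℓ : ℕ)
    (F : ℕ → Y → ℝ)
    (hFL2 : ∀ n : ℕ, 1 ≤ n → MemLp (F n) 2 ν)
    (M δ : ℝ) (hM : 1 ≤ M) (hδ : 1 < δ)
    (b : Fin ℓ → Fin ℓ → ℕ → ℕ → ℝ≥0∞) (hb1 : ∀ i j m n, 1 ≤ b i j m n)
    (c : Fin ℓ → Fin ℓ → ℕ → ℝ≥0∞) (hc1 : ∀ i j n, 1 ≤ c i j n)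
    (hcorr : ∀ m n : ℕ, 1 ≤ m → 1 ≤ n →
      |∫ y, F m y * F n y ∂ν| ≤
        M * ∑ i, ∑ j, ((b i j m n ^ (-δ)).toReal + (c i j m ^ (-δ)).toReal +
          (c i j n ^ (-δ)).toReal))
    (hccard : ∀ i j, ∀ n : ℕ, 1 ≤ n → ∀ s : Finset ℕ,
      (∀ k ∈ s, 1 ≤ k ∧ c i j k ≤ (n : ℝ≥0∞)) → (s.card : ℝ) ≤ M * n)
    (hbcard : ∀ i j, ∀ m n : ℕ, 1 ≤ m → 1 ≤ n → ∀ s : Finset ℕ,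
      (∀ k ∈ s, 1 ≤ k ∧ b i j m k ≤ (n : ℝ≥0∞)) → (s.card : ℝ) ≤ M * n) :
    ∀ m n : ℕ, m < n →
      ∫ y, (∑ k ∈ Finset.Ioc m n, F k y) ^ 2 ∂ν ≤
        (4 : ℝ) ^ (1 + δ) * M ^ (1 + δ) * (δ - 1)⁻¹ * (ℓ : ℝ) ^ 2 *
          ((n : ℝ) - (m : ℝ)) := by
  intro m n hmn
  set s := Ioc m n
  have hs : ∀ k ∈ s, 1 ≤ k := fun k hk ↦ by have := (mem_Ioc.1 hk).1; omega
  have hM0 : 0 ≤ M := by linarith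
  set K := (2 * M) ^ δ * (δ / (δ - 1))
  have hB : ∀ p : Fin ℓ × Fin ℓ, ∀ k ∈ s, ∑ k' ∈ s, (b p.1 p.2 k k' ^ (-δ)).toReal ≤ K :=
    fun p k hk ↦ sum_toReal_rpow_neg_le hM0 hδ (fun _ _ ↦ hb1 ..) fun n hn t hts hle ↦
      hbcard p.1 p.2 k n (hs k hk) hn t fun k' hk' ↦ ⟨hs k' (hts hk'), hle k' hk'⟩
  have hC : ∀ p : Fin ℓ × Fin ℓ, ∑ k ∈ s, (c p.1 p.2 k ^ (-δ)).toReal ≤ K :=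
    fun p ↦ sum_toReal_rpow_neg_le hM0 hδ (fun _ _ ↦ hc1 ..) fun n hn t hts hle ↦
      hccard p.1 p.2 n hn t fun k hk ↦ ⟨hs k (hts hk), hle k hk⟩
  calc ∫ y, (∑ k ∈ s, F k y) ^ 2 ∂ν
      = ∑ k ∈ s, ∑ k' ∈ s, ∫ y, F k y * F k' y ∂ν :=
        integral_sq_sum_eq_sum_sum fun k hk ↦ hFL2 k (hs k hk)
    _ ≤ ∑ k ∈ s, ∑ k' ∈ s, M * ∑ p : Fin ℓ × Fin ℓ, ((b p.1 p.2 k k' ^ (-δ)).toReal +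
          (c p.1 p.2 k ^ (-δ)).toReal + (c p.1 p.2 k' ^ (-δ)).toReal) := by
        gcongr with k hk k' hk'
        rw [Fintype.sum_prod_type]
        exact (le_abs_self _).trans (hcorr k k' (hs k hk) (hs k' hk'))
    _ ≤ M * (Fintype.card (Fin ℓ × Fin ℓ) * (3 * #s * K)) := by
        simp only [← mul_sum]
        exact mul_le_mul_of_nonneg_left (sum_sum_sum_add_add_le s _ _ hB hC) hM0
    _ = 3 * M * K * (ℓ : ℝ) ^ 2 * ((n : ℝ) - m) := by
        rw [Fintype.card_prod, Fintype.card_fin, Nat.card_Ioc, Nat.cast_sub hmn.le]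
        push_cast; ring
    _ ≤ _ := by
        have : (m : ℝ) ≤ n := by exact_mod_cast hmn.le
        gcongr ?_ * _ * _
        exact three_mul_mul_two_mul_rpow_le hM0 hδ

theorem second_moment_bound_delta_gt_one
    {X Y : Type*} [MeasurableSpace X] [MeasurableSpace Y]
    (ν : Measure Y) [IsProbabilityMeasure ν]
    (ℓ : ℕ) (hℓ : 1 ≤ ℓ)
    (ξ : Fin ℓ → Y → X) (hξ : ∀ i, Measurable (ξ i))
    (h : Fin ℓ → ℕ → X → X) (hh : ∀ i n, Measurable (h i n))
    (f : Fin ℓ → X → ℝ) (hf : ∀ i, Measurable (f i))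
    (F : ℕ → Y → ℝ) (hF : ∀ n y, F n y = ∏ i, f i (h i n (ξ i y)))
    (hFL2 : ∀ n : ℕ, 1 ≤ n → MemLp (F n) 2 ν)
    (M δ : ℝ) (hM : 1 ≤ M) (hδ : 1 < δ)
    (b : Fin ℓ → Fin ℓ → ℕ → ℕ → ℝ≥0∞) (hb1 : ∀ i j m n, 1 ≤ b i j m n)
    (c : Fin ℓ → Fin ℓ → ℕ → ℝ≥0∞) (hc1 : ∀ i j n, 1 ≤ c i j n)
    (hcorr : ∀ m n : ℕ, 1 ≤ m → 1 ≤ n →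
      |∫ y, F m y * F n y ∂ν| ≤
        M * ∑ i, ∑ j, ((b i j m n ^ (-δ)).toReal + (c i j m ^ (-δ)).toReal +
          (c i j n ^ (-δ)).toReal))
    (hccard : ∀ i j, ∀ n : ℕ, 1 ≤ n → ∀ s : Finset ℕ,
      (∀ k ∈ s, 1 ≤ k ∧ c i j k ≤ (n : ℝ≥0∞)) → (s.card : ℝ) ≤ M * n)
    (hbcard : ∀ i j, ∀ m n : ℕ, 1 ≤ m → 1 ≤ n → ∀ s : Finset ℕ,
      (∀ k ∈ s, 1 ≤ k ∧ b i j m k ≤ (n : ℝ≥0∞)) → (s.card : ℝ) ≤ M * n) :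
    ∀ m n : ℕ, m < n →
      ∫ y, (∑ k ∈ Finset.Ioc m n, F k y) ^ 2 ∂ν ≤
        (4 : ℝ) ^ (1 + δ) * M ^ (1 + δ) * (δ - 1)⁻¹ * (ℓ : ℝ) ^ 2 *
          ((n : ℝ) - (m : ℝ)) :=
  second_moment_bound_delta_gt_one_general ν ℓ F hFL2 M δ hM hδ b hb1 c hc1 hcorr hccard hbcard
end
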